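/- arXiv:2406.03302 — 2 statements merged into one kernel-verified Lean document; each statement's English description precedes it below -/
import Mathlib

section
/- Assume (i) consistency for a=2 (A(ω)=2 implies Y²(ω)=Y(ω)), (ii) mean transportability for a=2 (E[Y²|X=x,S=1]=E[Y²|X=x,S=0] whenever P(X=x,S=1)>0 and P(X=x,S=0)>0), (iii) positivity of the external source (P(S=0|X=x)>0 whenever P(X=x,S=1)>0), and (iv) uniform use of treatment 2 in the external data (P(A=2|S=0)=1). Then E[Y² | S=1] = η := Σ_x E[Y | X=x, S=0] · P(X=x | S=1), summing over x with P(X=x,S=1)>0. -/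
open Finset
open scoped Classical

noncomputable def pr {Ω : Type*} [Fintype Ω] (P : Ω → ℝ) (E : Ω → Prop) : ℝ :=
  ∑ ω, if E ω then P ω else 0

noncomputable def cexp {Ω : Type*} [Fintype Ω] (P : Ω → ℝ) (Y : Ω → ℝ) (E : Ω → Prop) : ℝ :=
  (∑ ω, if E ω then Y ω * P ω else 0) / pr P E

noncomputable def cpr {Ω : Type*} [Fintype Ω] (P : Ω → ℝ) (E F : Ω → Prop) : ℝ :=
  pr P (fun ω => E ω ∧ F ω) / pr P F

/-! Under consistency and uniform use of treatment 2 in the external source, `Y² = Y` almost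
surely on `S = 0`, so `E[Y | X = x, S = 0] = E[Y² | X = x, S = 0]`, which equals
`E[Y² | X = x, S = 1]` by transportability (positivity makes both cells non-null). The claim is
then the law of total expectation for `E[Y² | S = 1]` over the values of `X`. -/

section Probability

variable {Ω : Type*} [Fintype Ω] {P : Ω → ℝ}

lemma pr_nonneg (hP : ∀ ω, 0 ≤ P ω) (E : Ω → Prop) : 0 ≤ pr P E :=
  Finset.sum_nonneg fun ω _ => by split_ifs <;> simp [hP ω]

lemma eq_zero_of_pr_eq_zero (hP : ∀ ω, 0 ≤ P ω) {E : Ω → Prop} (h : pr P E = 0) {ω : Ω}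
    (hω : E ω) : P ω = 0 := by
  have := (Finset.sum_eq_zero_iff_of_nonneg fun ω _ => by split_ifs <;> simp [hP ω]).mp h ω
    (mem_univ ω)
  simpa [hω] using this

lemma pr_eq_pr_and_add_pr_not_and (E F : Ω → Prop) :
    pr P F = pr P (fun ω => E ω ∧ F ω) + pr P (fun ω => ¬E ω ∧ F ω) := by
  simp only [pr, ← Finset.sum_add_distrib]
  refine Finset.sum_congr rfl fun ω _ => ?_
  by_cases hE : E ω <;> simp [hE]

lemma eq_zero_of_cpr_eq_one (hP : ∀ ω, 0 ≤ P ω) {E F : Ω → Prop} (h : cpr P E F = 1)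
    {ω : Ω} (hF : F ω) (hE : ¬E ω) : P ω = 0 := by
  have hF0 : pr P F ≠ 0 := fun h0 => by simp [cpr, h0] at h
  have hEF : pr P (fun ω => E ω ∧ F ω) = pr P F := (div_eq_one_iff_eq hF0).mp h
  have hnot : pr P (fun ω => ¬E ω ∧ F ω) = 0 := by
    linarith [pr_eq_pr_and_add_pr_not_and (P := P) E F]
  exact eq_zero_of_pr_eq_zero hP hnot ⟨hE, hF⟩

lemma pr_and_pos_of_cpr_ne_zero (hP : ∀ ω, 0 ≤ P ω) {E F : Ω → Prop} (h : cpr P E F ≠ 0) :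
    0 < pr P (fun ω => E ω ∧ F ω) :=
  (pr_nonneg hP _).lt_of_ne' (div_ne_zero_iff.mp h).1

lemma cexp_congr {Y Z : Ω → ℝ} {E : Ω → Prop} (h : ∀ ω, E ω → P ω ≠ 0 → Y ω = Z ω) :
    cexp P Y E = cexp P Z E := by
  unfold cexp
  congr 1
  refine Finset.sum_congr rfl fun ω _ => ?_
  by_cases hE : E ω
  · by_cases hP : P ω = 0
    · simp [hE, hP]
    · simp [hE, h ω hE hP]
  · simp [hE]

lemma cexp_mul_pr (hP : ∀ ω, 0 ≤ P ω) (Y : Ω → ℝ) (E : Ω → Prop) :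
    cexp P Y E * pr P E = ∑ ω, if E ω then Y ω * P ω else 0 := by
  by_cases h0 : pr P E = 0
  · rw [h0, mul_zero]
    refine (Finset.sum_eq_zero fun ω _ => ?_).symm
    split_ifs with hE
    · rw [eq_zero_of_pr_eq_zero hP h0 hE, mul_zero]
    · rfl
  · exact div_mul_cancel₀ _ h0

theorem cexp_eq_sum_cexp_mul_cpr {𝓧 : Type*} [Fintype 𝓧] (hP : ∀ ω, 0 ≤ P ω) (Y : Ω → ℝ)
    (X : Ω → 𝓧) (F : Ω → Prop) :
    cexp P Y F = ∑ x, cexp P Y (fun ω => X ω = x ∧ F ω) * cpr P (fun ω => X ω = x) F := by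
  simp only [cpr, ← mul_div_assoc, ← Finset.sum_div, cexp_mul_pr hP]
  rw [cexp, Finset.sum_comm]
  congr 1
  refine Finset.sum_congr rfl fun ω _ => ?_
  by_cases hF : F ω <;> simp [hF]

end Probability

theorem stmt4_general    {Ω 𝓧 : Type*} [Fintype Ω] [Fintype 𝓧]
    (P : Ω → ℝ) (hP : ∀ ω, 0 ≤ P ω)
    (X : Ω → 𝓧) (S : Ω → ℕ) (A : Ω → ℕ) (Y : Ω → ℝ)
    (Y2 : Ω → ℝ)
    (hcons : ∀ ω, A ω = 2 → Y2 ω = Y ω)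
    (htrans : ∀ x, 0 < pr P (fun ω => X ω = x ∧ S ω = 1) → 0 < pr P (fun ω => X ω = x ∧ S ω = 0) → cexp P Y2 (fun ω => X ω = x ∧ S ω = 1) = cexp P Y2 (fun ω => X ω = x ∧ S ω = 0))
    (hextpos : ∀ x, 0 < pr P (fun ω => X ω = x ∧ S ω = 1) → 0 < cpr P (fun ω => S ω = 0) (fun ω => X ω = x))
    (huniform : cpr P (fun ω => A ω = 2) (fun ω => S ω = 0) = 1)
    : cexp P Y2 (fun ω => S ω = 1) =
      ∑ x ∈ univ.filter (fun x => 0 < pr P (fun ω => X ω = x ∧ S ω = 1)),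
        cexp P Y (fun ω => X ω = x ∧ S ω = 0) * (pr P (fun ω => X ω = x ∧ S ω = 1) / pr P (fun ω => S ω = 1)) := by
  have hY2_eq_Y : ∀ x, cexp P Y2 (fun ω => X ω = x ∧ S ω = 0) =
      cexp P Y (fun ω => X ω = x ∧ S ω = 0) :=
    fun x => cexp_congr fun ω hω hPω => hcons ω <| by
      by_contra hA
      exact hPω (eq_zero_of_cpr_eq_one hP huniform hω.2 hA)
  have hpos0 : ∀ x, 0 < pr P (fun ω => X ω = x ∧ S ω = 1) →
      0 < pr P (fun ω => X ω = x ∧ S ω = 0) := fun x hx => by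
    simpa only [and_comm] using pr_and_pos_of_cpr_ne_zero hP (hextpos x hx).ne'
  calc cexp P Y2 (fun ω => S ω = 1)
      = ∑ x, cexp P Y2 (fun ω => X ω = x ∧ S ω = 1) *
          cpr P (fun ω => X ω = x) (fun ω => S ω = 1) := cexp_eq_sum_cexp_mul_cpr hP Y2 X _
    _ = ∑ x ∈ univ.filter (fun x => 0 < pr P (fun ω => X ω = x ∧ S ω = 1)),
          cexp P Y2 (fun ω => X ω = x ∧ S ω = 1) *
            cpr P (fun ω => X ω = x) (fun ω => S ω = 1) :=
      (Finset.sum_filter_of_ne fun x _ hx =>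
        pr_and_pos_of_cpr_ne_zero hP (right_ne_zero_of_mul hx)).symm
    _ = _ := Finset.sum_congr rfl fun x hx => by
      have hx1 := (Finset.mem_filter.mp hx).2
      rw [htrans x hx1 (hpos0 x hx1), hY2_eq_Y, cpr]

theorem stmt4    {Ω 𝓧 : Type*} [Fintype Ω] [Fintype 𝓧]
    (P : Ω → ℝ) (hP : ∀ ω, 0 ≤ P ω) (hPsum : ∑ ω, P ω = 1)
    (X : Ω → 𝓧) (S : Ω → ℕ) (A : Ω → ℕ) (Y : Ω → ℝ)
    (Y2 : Ω → ℝ)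
    (hS1 : 0 < pr P (fun ω => S ω = 1))
    (hS0 : 0 < pr P (fun ω => S ω = 0))
    (hcons : ∀ ω, A ω = 2 → Y2 ω = Y ω)
    (htrans : ∀ x, 0 < pr P (fun ω => X ω = x ∧ S ω = 1) → 0 < pr P (fun ω => X ω = x ∧ S ω = 0) → cexp P Y2 (fun ω => X ω = x ∧ S ω = 1) = cexp P Y2 (fun ω => X ω = x ∧ S ω = 0))
    (hextpos : ∀ x, 0 < pr P (fun ω => X ω = x ∧ S ω = 1) → 0 < cpr P (fun ω => S ω = 0) (fun ω => X ω = x))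
    (huniform : cpr P (fun ω => A ω = 2) (fun ω => S ω = 0) = 1)
    : cexp P Y2 (fun ω => S ω = 1) =
      ∑ x ∈ univ.filter (fun x => 0 < pr P (fun ω => X ω = x ∧ S ω = 1)),
        cexp P Y (fun ω => X ω = x ∧ S ω = 0) * (pr P (fun ω => X ω = x ∧ S ω = 1) / pr P (fun ω => S ω = 1)) :=
  stmt4_general P hP X S A Y Y2 hcons htrans hextpos huniform
end

section
/- Assume: consistency for a=0,1; trial exchangeability over A for a=0,1 with trial positivity; conditional exchangeability over A in the third source for a=0 (E[Y⁰|X=x,S=2]=E[Y⁰|X=x,S=2,A=0]) with positivity P(A=0|X=x,S=2)>0; positivity P(S=1|X=x)>0 for x with P(X=x,S=2)>0; and transportability of conditional relative effects from the trial: E[Y¹|X=x,S=2]/E[Y⁰|X=x,S=2] = E[Y¹|X=x,S=1]/E[Y⁰|X=x,S=1] whenever the relevant joint probabilities are positive, with all these conditional means nonzero. Then E[Y¹ | S=2] = ρ*₁ := Σ_x E[Y|X=x,S=2,A=0] · (E[Y|X=x,S=1,A=1] / E[Y|X=x,S=1,A=0]) · P(X=x | S=2), summing over x with P(X=x,S=2)>0.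 -/
/-!
Split the source population `S = 2` into covariate strata: by the law of total expectation,
`E[Y¹ | S = 2]` is the average over the strata of positive mass of `E[Y¹ | X = x, S = 2]`.
In each such stratum the transported relative effect writes this mean as
`E[Y⁰ | X = x, S = 2] · E[Y¹ | X = x, S = 1] / E[Y⁰ | X = x, S = 1]`, and exchangeability together
with consistency turns each of the three potential-outcome means into a mean of the observed
outcome `Y` among the correspondingly treated units.
-/

open Finset
open scoped Classical

namespace FiniteProb

variable {Ω : Type*} [Fintype Ω] (P : Ω → ℝ)

noncomputable def setSum (Y : Ω → ℝ) (E : Ω → Prop) : ℝ :=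
  ∑ ω, if E ω then Y ω * P ω else 0

theorem cexp_eq_setSum_div (Y : Ω → ℝ) (E : Ω → Prop) : cexp P Y E = setSum P Y E / pr P E :=
  rfl

variable {P}

theorem pr_nonneg (hP : ∀ ω, 0 ≤ P ω) (E : Ω → Prop) : 0 ≤ pr P E :=
  sum_nonneg fun ω _ => by split_ifs <;> simp [hP ω]

theorem pr_pos_of_cpr_pos (hP : ∀ ω, 0 ≤ P ω) {E F : Ω → Prop} (h : 0 < cpr P E F) :
    0 < pr P (fun ω => F ω ∧ E ω) := by
  have hEF : pr P (fun ω => E ω ∧ F ω) ≠ 0 := fun h0 => by simp [cpr, h0] at h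
  simp_rw [and_comm (a := F _)]
  exact (pr_nonneg hP _).lt_of_ne' hEF

theorem setSum_eq_zero_of_pr_eq_zero (hP : ∀ ω, 0 ≤ P ω) (Y : Ω → ℝ) {E : Ω → Prop}
    (h : pr P E = 0) : setSum P Y E = 0 := by
  have hnull : ∀ ω, E ω → P ω = 0 := fun ω hω => by
    simpa [hω] using (sum_eq_zero_iff_of_nonneg fun i _ => by split_ifs <;> simp [hP i]).mp h ω
      (mem_univ ω)
  exact sum_eq_zero fun ω _ => by split_ifs with hω <;> simp [hnull ω, hω]

theorem setSum_eq_cexp_mul_pr (Y : Ω → ℝ) {E : Ω → Prop} (h : pr P E ≠ 0) :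
    setSum P Y E = cexp P Y E * pr P E := by
  rw [cexp_eq_setSum_div, div_mul_cancel₀ _ h]

theorem setSum_eq_sum_setSum_fiber {𝓧 : Type*} [Fintype 𝓧] (X : Ω → 𝓧) (Y : Ω → ℝ)
    (E : Ω → Prop) : setSum P Y E = ∑ x, setSum P Y (fun ω => X ω = x ∧ E ω) := by
  unfold setSum
  rw [sum_comm]
  refine sum_congr rfl fun ω _ => ?_
  by_cases hE : E ω <;> simp [hE]

theorem cexp_congr {Y Z : Ω → ℝ} {E : Ω → Prop} (h : ∀ ω, E ω → Y ω = Z ω) :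
    cexp P Y E = cexp P Z E := by
  simp only [cexp_eq_setSum_div, setSum]
  congr 1
  exact sum_congr rfl fun ω _ => by split_ifs with hω <;> simp [h ω, hω]

theorem cexp_eq_sum_cexp_fiber {𝓧 : Type*} [Fintype 𝓧] (hP : ∀ ω, 0 ≤ P ω) (X : Ω → 𝓧)
    (Y : Ω → ℝ) (E : Ω → Prop) :
    cexp P Y E = ∑ x ∈ univ.filter (fun x => 0 < pr P (fun ω => X ω = x ∧ E ω)),
      cexp P Y (fun ω => X ω = x ∧ E ω) * (pr P (fun ω => X ω = x ∧ E ω) / pr P E) := by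
  have hnull : ∀ x ∉ univ.filter (fun x => 0 < pr P (fun ω => X ω = x ∧ E ω)),
      setSum P Y (fun ω => X ω = x ∧ E ω) = 0 := fun x hx =>
    setSum_eq_zero_of_pr_eq_zero hP Y <| Eq.symm <|
      (pr_nonneg hP _).eq_of_not_lt fun hpos => hx (mem_filter.mpr ⟨mem_univ x, hpos⟩)
  rw [cexp_eq_setSum_div, setSum_eq_sum_setSum_fiber X, ← sum_subset (filter_subset _ _)
    fun x _ hx => hnull x hx, sum_div]
  refine sum_congr rfl fun x hx => ?_
  rw [setSum_eq_cexp_mul_pr Y (mem_filter.mp hx).2.ne', mul_div_assoc]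

end FiniteProb

open FiniteProb

theorem stmt17_general    {Ω 𝓧 : Type*} [Fintype Ω] [Fintype 𝓧]
    (P : Ω → ℝ) (hP : ∀ ω, 0 ≤ P ω)
    (X : Ω → 𝓧) (S : Ω → ℕ) (A : Ω → ℕ) (Y : Ω → ℝ)
    (Y0 Y1 : Ω → ℝ)
    (hcons0 : ∀ ω, A ω = 0 → Y0 ω = Y ω)
    (hcons1 : ∀ ω, A ω = 1 → Y1 ω = Y ω)
    (hexch0 : ∀ x, 0 < pr P (fun ω => X ω = x ∧ S ω = 1) → cexp P Y0 (fun ω => X ω = x ∧ S ω = 1) = cexp P Y0 (fun ω => X ω = x ∧ S ω = 1 ∧ A ω = 0))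
    (hexch1 : ∀ x, 0 < pr P (fun ω => X ω = x ∧ S ω = 1) → cexp P Y1 (fun ω => X ω = x ∧ S ω = 1) = cexp P Y1 (fun ω => X ω = x ∧ S ω = 1 ∧ A ω = 1))
    (hexchS2 : ∀ x, 0 < pr P (fun ω => X ω = x ∧ S ω = 2) → cexp P Y0 (fun ω => X ω = x ∧ S ω = 2) = cexp P Y0 (fun ω => X ω = x ∧ S ω = 2 ∧ A ω = 0))
    (hpos1x : ∀ x, 0 < pr P (fun ω => X ω = x ∧ S ω = 2) → 0 < cpr P (fun ω => S ω = 1) (fun ω => X ω = x))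
    (htransratio : ∀ x, 0 < pr P (fun ω => X ω = x ∧ S ω = 2) → 0 < pr P (fun ω => X ω = x ∧ S ω = 1) →
      cexp P Y1 (fun ω => X ω = x ∧ S ω = 2) / cexp P Y0 (fun ω => X ω = x ∧ S ω = 2) =
      cexp P Y1 (fun ω => X ω = x ∧ S ω = 1) / cexp P Y0 (fun ω => X ω = x ∧ S ω = 1))
    (hne : ∀ x, 0 < pr P (fun ω => X ω = x ∧ S ω = 2) → 0 < pr P (fun ω => X ω = x ∧ S ω = 1) →
      cexp P Y0 (fun ω => X ω = x ∧ S ω = 2) ≠ 0 ∧ cexp P Y0 (fun ω => X ω = x ∧ S ω = 1) ≠ 0 ∧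
      cexp P Y1 (fun ω => X ω = x ∧ S ω = 1) ≠ 0 ∧ cexp P Y (fun ω => X ω = x ∧ S ω = 1 ∧ A ω = 0) ≠ 0)
    : cexp P Y1 (fun ω => S ω = 2) =
      ∑ x ∈ univ.filter (fun x => 0 < pr P (fun ω => X ω = x ∧ S ω = 2)),
        cexp P Y (fun ω => X ω = x ∧ S ω = 2 ∧ A ω = 0) *
        (cexp P Y (fun ω => X ω = x ∧ S ω = 1 ∧ A ω = 1) / cexp P Y (fun ω => X ω = x ∧ S ω = 1 ∧ A ω = 0)) *
        (pr P (fun ω => X ω = x ∧ S ω = 2) / pr P (fun ω => S ω = 2)) := by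
  rw [cexp_eq_sum_cexp_fiber hP X]
  refine sum_congr rfl fun x hx => ?_
  have hx2 : 0 < pr P (fun ω => X ω = x ∧ S ω = 2) := (mem_filter.mp hx).2
  have hx1 : 0 < pr P (fun ω => X ω = x ∧ S ω = 1) := pr_pos_of_cpr_pos hP (hpos1x x hx2)
  have hY0S2 : cexp P Y0 (fun ω => X ω = x ∧ S ω = 2)
      = cexp P Y (fun ω => X ω = x ∧ S ω = 2 ∧ A ω = 0) :=
    (hexchS2 x hx2).trans (cexp_congr fun ω h => hcons0 ω h.2.2)
  have hY1S1 : cexp P Y1 (fun ω => X ω = x ∧ S ω = 1)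
      = cexp P Y (fun ω => X ω = x ∧ S ω = 1 ∧ A ω = 1) :=
    (hexch1 x hx1).trans (cexp_congr fun ω h => hcons1 ω h.2.2)
  have hY0S1 : cexp P Y0 (fun ω => X ω = x ∧ S ω = 1)
      = cexp P Y (fun ω => X ω = x ∧ S ω = 1 ∧ A ω = 0) :=
    (hexch0 x hx1).trans (cexp_congr fun ω h => hcons0 ω h.2.2)
  have hY1S2 := (div_eq_iff (hne x hx2 hx1).1).mp (htransratio x hx2 hx1)
  rw [hY1S2, ← hY0S2, ← hY1S1, ← hY0S1, mul_comm (_ / _)]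

theorem stmt17    {Ω 𝓧 : Type*} [Fintype Ω] [Fintype 𝓧]
    (P : Ω → ℝ) (hP : ∀ ω, 0 ≤ P ω) (hPsum : ∑ ω, P ω = 1)
    (X : Ω → 𝓧) (S : Ω → ℕ) (A : Ω → ℕ) (Y : Ω → ℝ)
    (Y0 Y1 : Ω → ℝ)
    (hS2 : 0 < pr P (fun ω => S ω = 2))
    (hcons0 : ∀ ω, A ω = 0 → Y0 ω = Y ω)
    (hcons1 : ∀ ω, A ω = 1 → Y1 ω = Y ω)
    (hexch0 : ∀ x, 0 < pr P (fun ω => X ω = x ∧ S ω = 1) → cexp P Y0 (fun ω => X ω = x ∧ S ω = 1) = cexp P Y0 (fun ω => X ω = x ∧ S ω = 1 ∧ A ω = 0))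
    (hexch1 : ∀ x, 0 < pr P (fun ω => X ω = x ∧ S ω = 1) → cexp P Y1 (fun ω => X ω = x ∧ S ω = 1) = cexp P Y1 (fun ω => X ω = x ∧ S ω = 1 ∧ A ω = 1))
    (hpos0 : ∀ x, 0 < pr P (fun ω => X ω = x ∧ S ω = 1) → 0 < cpr P (fun ω => A ω = 0) (fun ω => X ω = x ∧ S ω = 1))
    (hpos1 : ∀ x, 0 < pr P (fun ω => X ω = x ∧ S ω = 1) → 0 < cpr P (fun ω => A ω = 1) (fun ω => X ω = x ∧ S ω = 1))
    (hexchS2 : ∀ x, 0 < pr P (fun ω => X ω = x ∧ S ω = 2) → cexp P Y0 (fun ω => X ω = x ∧ S ω = 2) = cexp P Y0 (fun ω => X ω = x ∧ S ω = 2 ∧ A ω = 0))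
    (hposS2 : ∀ x, 0 < pr P (fun ω => X ω = x ∧ S ω = 2) → 0 < cpr P (fun ω => A ω = 0) (fun ω => X ω = x ∧ S ω = 2))
    (hpos1x : ∀ x, 0 < pr P (fun ω => X ω = x ∧ S ω = 2) → 0 < cpr P (fun ω => S ω = 1) (fun ω => X ω = x))
    (htransratio : ∀ x, 0 < pr P (fun ω => X ω = x ∧ S ω = 2) → 0 < pr P (fun ω => X ω = x ∧ S ω = 1) →
      cexp P Y1 (fun ω => X ω = x ∧ S ω = 2) / cexp P Y0 (fun ω => X ω = x ∧ S ω = 2) =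
      cexp P Y1 (fun ω => X ω = x ∧ S ω = 1) / cexp P Y0 (fun ω => X ω = x ∧ S ω = 1))
    (hne : ∀ x, 0 < pr P (fun ω => X ω = x ∧ S ω = 2) → 0 < pr P (fun ω => X ω = x ∧ S ω = 1) →
      cexp P Y0 (fun ω => X ω = x ∧ S ω = 2) ≠ 0 ∧ cexp P Y0 (fun ω => X ω = x ∧ S ω = 1) ≠ 0 ∧
      cexp P Y1 (fun ω => X ω = x ∧ S ω = 1) ≠ 0 ∧ cexp P Y (fun ω => X ω = x ∧ S ω = 1 ∧ A ω = 0) ≠ 0)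
    : cexp P Y1 (fun ω => S ω = 2) =
      ∑ x ∈ univ.filter (fun x => 0 < pr P (fun ω => X ω = x ∧ S ω = 2)),
        cexp P Y (fun ω => X ω = x ∧ S ω = 2 ∧ A ω = 0) *
        (cexp P Y (fun ω => X ω = x ∧ S ω = 1 ∧ A ω = 1) / cexp P Y (fun ω => X ω = x ∧ S ω = 1 ∧ A ω = 0)) *
        (pr P (fun ω => X ω = x ∧ S ω = 2) / pr P (fun ω => S ω = 2)) :=
  stmt17_general P hP X S A Y Y0 Y1 hcons0 hcons1 hexch0 hexch1 hexchS2 hpos1x htransratio hne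
end
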